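/- arXiv:2603.10309 — 4 statements merged into one kernel-verified Lean document; each statement's English description precedes it below -/
import Mathlib

section
/- Let f : {0,1}^n → ℝ satisfy f(v_I) ≠ 0 for every I ⊆ [n] with |I| ≤ t, and let 𝒥 ⊆ 2^[n] be a family with |J| > t for all J ∈ 𝒥. Then the functions {x_I f : |I| ≤ t} ∪ {x_J : J ∈ 𝒥} are linearly independent in ℝ^{{0,1}^n}. -/
/-!
Order the functions by the sets `I` (resp. `J`) they are attached to and evaluate at
the characteristic vectors of these sets. Since `x_I` vanishes off the up-set of `I`, the
evaluation matrix is triangular with respect to inclusion, and its diagonal entries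
`f(v_I)` and `x_J(v_J) = 1` are nonzero; the two kinds of sets never coincide because of
their sizes.
-/

/-- The monomial function `x_I` on the Boolean cube (identified with subsets of `[n]`
via characteristic vectors). -/
def xI {n : ℕ} (I : Finset (Fin n)) : Finset (Fin n) → ℝ :=
  fun J => ∏ i ∈ I, (if i ∈ J then (1 : ℝ) else 0)

theorem linearIndependent_of_support_subset_Ici {ι X R : Type*} [Fintype ι] [PartialOrder X]
    [WellFoundedLT X] [Ring R] [NoZeroDivisors R] {v : ι → X → R} {p : ι → X}
    (hp : Function.Injective p) (hdiag : ∀ i, v i (p i) ≠ 0)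
    (hsupp : ∀ i, Function.support (v i) ⊆ Set.Ici (p i)) :
    LinearIndependent R v := by
  classical
  rw [Fintype.linearIndependent_iff]
  intro g hg
  suffices ∀ x i, p i = x → g i = 0 from fun i => this _ i rfl
  intro x
  induction x using WellFoundedLT.induction with
  | _ x ih =>
    rintro i rfl
    have hsum : ∑ j, g j * v j (p i) = 0 := by simpa using congrFun hg (p i)
    rw [Finset.sum_eq_single i] at hsum
    · exact (mul_eq_zero.mp hsum).resolve_right (hdiag i)
    · intro j _ hji
      by_cases hvanish : v j (p i) = 0
      · rw [hvanish, mul_zero]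
      · have hlt : p j < p i := (hsupp j hvanish).lt_of_ne (hp.ne hji)
        rw [ih (p j) hlt j rfl, zero_mul]
    · simp

theorem xI_apply {n : ℕ} (I X : Finset (Fin n)) : xI I X = if I ⊆ X then 1 else 0 := by
  unfold xI
  split_ifs with hIX
  · exact Finset.prod_eq_one fun i hi => if_pos (hIX hi)
  · obtain ⟨i, hi, hiX⟩ := Finset.not_subset.mp hIX
    exact Finset.prod_eq_zero hi (if_neg hiX)

theorem xI_self {n : ℕ} (I : Finset (Fin n)) : xI I I = 1 := by
  simp [xI_apply]

theorem support_xI {n : ℕ} (I : Finset (Fin n)) : Function.support (xI I) ⊆ Set.Ici I :=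
  fun X hX => by_contra fun hIX => hX (by simp [xI_apply, show ¬ I ⊆ X from hIX])

/-- If `f` is nonzero on all characteristic vectors of sets of size at most `t`,
and `𝒥` is a family of sets of size `> t`, then
`{x_I f : |I| ≤ t} ∪ {x_J : J ∈ 𝒥}` is linearly independent. -/
theorem stmt2 (n t : ℕ) (f : Finset (Fin n) → ℝ)
    (hf : ∀ I : Finset (Fin n), I.card ≤ t → f I ≠ 0)
    (𝒥 : Finset (Finset (Fin n))) (h𝒥 : ∀ J ∈ 𝒥, t < J.card) :
    LinearIndependent ℝ
      (Sum.elim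
        (fun I : {I : Finset (Fin n) // I.card ≤ t} =>
          (fun X => xI I.1 X * f X : Finset (Fin n) → ℝ))
        (fun J : {J : Finset (Fin n) // J ∈ 𝒥} => xI J.1)) := by
  have hp : Function.Injective
      (Sum.elim (fun I : {I : Finset (Fin n) // I.card ≤ t} => I.1)
        (fun J : {J : Finset (Fin n) // J ∈ 𝒥} => J.1)) :=
    Subtype.val_injective.sumElim Subtype.val_injective fun I J hIJ =>
      (I.2.trans_lt (hIJ ▸ h𝒥 J.1 J.2)).false
  refine linearIndependent_of_support_subset_Ici hp ?_ ?_
  · rintro (⟨I, hI⟩ | J)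
    · simpa [xI_self] using hf I hI
    · simp [xI_self]
  · rintro (I | J)
    · exact (Function.support_mul_subset_left _ _).trans (support_xI I.1)
    · exact support_xI J.1
end

section
/- Let p be prime, K, L ⊆ {0,…,p−1} disjoint with |K| = r, |L| = s, and k > s − r ≥ 0 for every k ∈ K. If ℱ ⊆ 2^[n] satisfies |F| mod p ∈ K for every F ∈ ℱ and |E ∩ F| mod p ∈ L for all distinct E, F ∈ ℱ, then |ℱ| + Σ_{j=s−r+1}^{s} |𝒩_j(ℱ)| ≤ Σ_{i=s−r+1}^{s} C(n,i). -/
/-!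
Work in the space of functions `2^[n] → 𝔽_p`. Take `f_F(S) = ∏_{ℓ ∈ L} (|F ∩ S| - ℓ)` for
`F ∈ ℱ`, `g_I(S) = 1_{I ⊆ S} ∏_{k ∈ K} (|S| - k)` for `|I| ≤ s - r`, and `1_{T ⊆ S}` for `T` in a
non-shadow layer `𝒩_j`, `s - r < j ≤ s`. All of them are multilinear polynomials of degree at most
`s` in the characteristic vector of `S`, a space of dimension `∑_{i ≤ s} C(n, i)`. Evaluating at
`S = F, I, T` gives a triangular matrix: `f_F` vanishes at the other members of `ℱ`, every other
function vanishes on `ℱ` (`g_I` because `|F| mod p ∈ K`, `1_{T ⊆ S}` because `T` lies in no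
member of `ℱ`), and the remaining ones are ordered by `|S|`. The gap `k > s - r` makes
`g_I(I) ≠ 0`, so the functions are linearly independent.
-/

def nonShadow (n j : ℕ) (ℱ : Finset (Finset (Fin n))) : Finset (Finset (Fin n)) :=
  (Finset.powersetCard j (Finset.univ : Finset (Fin n))).filter
    (fun T => ∀ F ∈ ℱ, ¬ T ⊆ F)

open Finset Submodule

theorem linearIndependent_of_eval_triangular {ι X R : Type*} [Fintype ι] [Ring R]
    [NoZeroDivisors R] (v : ι → X → R) (x : ι → X) (ρ : ι → ℕ) (hdiag : ∀ i, v i (x i) ≠ 0)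
    (htri : ∀ i j, j ≠ i → v j (x i) ≠ 0 → ρ j < ρ i) : LinearIndependent R v := by
  classical
  rw [Fintype.linearIndependent_iff]
  intro g hg
  suffices ∀ m i, ρ i = m → g i = 0 from fun i => this _ i rfl
  intro m
  induction m using Nat.strong_induction_on with
  | _ m ih =>
  rintro i rfl
  have hsum := congrFun hg (x i)
  rw [Finset.sum_apply, Finset.sum_eq_single i] at hsum
  · exact (mul_eq_zero.1 hsum).resolve_right (hdiag i)
  · intro j _ hji
    by_cases h : v j (x i) = 0
    · simp [h]
    · simp [ih _ (htri i j hji h) j rfl]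
  · simp

section DegLE

variable (R : Type*) {α : Type*} [CommRing R] [DecidableEq α]

def upIndicator (T : Finset α) : Finset α → R := fun S => if T ⊆ S then 1 else 0

/-- The functions `S ↦ P(1_S)` with `P` a multilinear polynomial of degree at most `d`. -/
def degLE (d : ℕ) : Submodule R (Finset α → R) := span R (upIndicator R '' {T | #T ≤ d})

def interPoly (C : Finset ℕ) (A : Finset α) : Finset α → R :=
  fun S => ∏ c ∈ C, ((#(A ∩ S) : R) - c)

variable {R}

lemma upIndicator_mul (T U : Finset α) :
    upIndicator R T * upIndicator R U = upIndicator R (T ∪ U) := by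
  funext S
  simp only [Pi.mul_apply, upIndicator, union_subset_iff]
  split_ifs <;> simp_all

lemma upIndicator_empty : upIndicator R (∅ : Finset α) = 1 := by
  funext S
  simp [upIndicator]

lemma upIndicator_mul_apply_of_not_subset {T S : Finset α} (h : ¬ T ⊆ S) (f : Finset α → R) :
    (upIndicator R T * f) S = 0 := by
  simp [upIndicator, h]

lemma upIndicator_mul_apply_self (T : Finset α) (f : Finset α → R) :
    (upIndicator R T * f) T = f T := by
  simp [upIndicator]

lemma upIndicator_mem_degLE {T : Finset α} {d : ℕ} (h : #T ≤ d) : upIndicator R T ∈ degLE R d :=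
  subset_span ⟨T, h, rfl⟩

lemma degLE_mono : Monotone (degLE R (α := α)) :=
  fun _ _ h => span_mono (Set.image_mono fun _ hT => le_trans hT h)

lemma one_mem_degLE (d : ℕ) : (1 : Finset α → R) ∈ degLE R d :=
  upIndicator_empty (R := R) (α := α) ▸ upIndicator_mem_degLE (by simp)

lemma degLE_mul_le (d e : ℕ) : degLE R (α := α) d * degLE R e ≤ degLE R (d + e) := by
  rw [degLE, degLE, span_mul_span, span_le]
  rintro _ ⟨_, ⟨T, hT, rfl⟩, _, ⟨U, hU, rfl⟩, rfl⟩
  simp only [upIndicator_mul]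
  exact upIndicator_mem_degLE ((card_union_le T U).trans (add_le_add hT hU))

lemma mul_mem_degLE {f g : Finset α → R} {d e : ℕ} (hf : f ∈ degLE R d) (hg : g ∈ degLE R e) :
    f * g ∈ degLE R (d + e) :=
  degLE_mul_le d e (mul_mem_mul hf hg)

lemma card_inter_sub_mem_degLE_one (A : Finset α) (c : R) :
    (fun S => (#(A ∩ S) : R) - c) ∈ degLE R 1 := by
  have : (fun S => (#(A ∩ S) : R) - c) = ∑ i ∈ A, upIndicator R {i} - c • 1 := by
    funext S
    simp [upIndicator, ← filter_mem_eq_inter]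
  rw [this]
  exact sub_mem (sum_mem fun i _ => upIndicator_mem_degLE (card_singleton i).le)
    (smul_mem _ _ (one_mem_degLE 1))

lemma interPoly_mem_degLE (C : Finset ℕ) (A : Finset α) : interPoly R C A ∈ degLE R #C := by
  induction C using Finset.induction_on with
  | empty =>
    convert one_mem_degLE (R := R) (α := α) _
    funext S
    simp [interPoly]
  | insert c C hc ih =>
    rw [card_insert_of_notMem hc, add_comm]
    convert mul_mem_degLE (card_inter_sub_mem_degLE_one A (c : R)) ih using 1
    funext S
    simp [interPoly, prod_insert hc]

end DegLE

lemma card_eq_sum_card_layers {α : Type*} (𝒢 : Finset (Finset α)) {m : ℕ} (h : ∀ T ∈ 𝒢, #T ≤ m) :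
    #𝒢 = ∑ j ∈ range (m + 1), #{T ∈ 𝒢 | #T = j} :=
  card_eq_sum_card_fiberwise fun T hT => mem_range.2 (Nat.lt_succ_of_le (h T hT))

section Counting

variable {α : Type*} [Fintype α]

lemma card_filter_card_le (d : ℕ) :
    #{T : Finset α | #T ≤ d} = ∑ i ∈ range (d + 1), (Fintype.card α).choose i := by
  rw [card_eq_sum_card_layers _ (m := d) (by simp)]
  refine sum_congr rfl fun i hi => ?_
  rw [← card_univ, ← card_powersetCard, powersetCard_eq_filter, powerset_univ, filter_filter]
  congr 1
  ext T
  simp only [mem_filter, mem_univ, true_and, mem_range] at hi ⊢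
  omega

variable [DecidableEq α] {R : Type*} [Field R]

lemma finrank_degLE_le (d : ℕ) :
    Module.finrank R (degLE R (α := α) d) ≤ ∑ i ∈ range (d + 1), (Fintype.card α).choose i := by
  classical
  calc Module.finrank R (degLE R (α := α) d)
      ≤ #(({T : Finset α | #T ≤ d} : Finset _).image (upIndicator R)) := by
        rw [degLE, ← coe_filter_univ, ← coe_image]
        exact finrank_span_finset_le_card _
    _ ≤ #{T : Finset α | #T ≤ d} := card_image_le
    _ = _ := card_filter_card_le d

lemma LinearIndependent.card_le_sum_choose {ι : Type*} [Fintype ι] {v : ι → Finset α → R}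
    (hv : LinearIndependent R v) {d : ℕ} (hmem : ∀ i, v i ∈ degLE R d) :
    Fintype.card ι ≤ ∑ i ∈ range (d + 1), (Fintype.card α).choose i :=
  calc Fintype.card ι = Module.finrank R (span R (Set.range v)) := (finrank_span_eq_card hv).symm
    _ ≤ Module.finrank R (degLE R (α := α) d) :=
        Submodule.finrank_mono (span_le.2 (Set.range_subset_iff.2 hmem))
    _ ≤ _ := finrank_degLE_le d

end Counting

lemma interPoly_eq_zero_iff {α : Type*} [DecidableEq α] {p : ℕ} [Fact p.Prime] {C : Finset ℕ}
    (hC : ∀ c ∈ C, c < p) (A S : Finset α) : interPoly (ZMod p) C A S = 0 ↔ #(A ∩ S) % p ∈ C := by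
  simp only [interPoly, prod_eq_zero_iff, sub_eq_zero, ZMod.natCast_eq_natCast_iff']
  constructor
  · rintro ⟨c, hc, h⟩
    rwa [h, Nat.mod_eq_of_lt (hC c hc)]
  · exact fun h => ⟨_, h, (Nat.mod_eq_of_lt (hC _ h)).symm⟩

section Modular

variable {α : Type*} [Fintype α] [DecidableEq α] {p : ℕ} {K L : Finset ℕ} {d : ℕ}
  {ℱ 𝒢 : Finset (Finset α)}

def absFamily (K L : Finset ℕ) (d : ℕ) (ℱ 𝒢 : Finset (Finset α)) :
    ℱ ⊕ 𝒢 → Finset α → ZMod p :=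
  Sum.elim (fun F => interPoly _ L F.1)
    (fun T => upIndicator _ T.1 * if #T.1 ≤ d then interPoly _ K univ else 1)

lemma absFamily_mem_degLE {s : ℕ} (hL : #L ≤ s) (hK : d + #K ≤ s)
    (h𝒢 : ∀ T ∈ 𝒢, #T ≤ s) (i : ℱ ⊕ 𝒢) :
    absFamily (p := p) K L d ℱ 𝒢 i ∈ degLE (ZMod p) s := by
  rcases i with F | T
  · exact degLE_mono hL (interPoly_mem_degLE L F.1)
  · simp only [absFamily, Sum.elim_inr]
    split_ifs with hT
    · exact degLE_mono (by omega) (mul_mem_degLE (upIndicator_mem_degLE le_rfl)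
        (interPoly_mem_degLE K univ))
    · rw [mul_one]
      exact upIndicator_mem_degLE (h𝒢 T.1 T.2)

variable [Fact p.Prime]

theorem linearIndependent_absFamily (hKp : ∀ k ∈ K, k < p) (hLp : ∀ ℓ ∈ L, ℓ < p)
    (hdisj : Disjoint K L) (hgap : ∀ k ∈ K, d < k)
    (hℱK : ∀ F ∈ ℱ, #F % p ∈ K) (hint : ∀ E ∈ ℱ, ∀ F ∈ ℱ, E ≠ F → #(E ∩ F) % p ∈ L)
    (h𝒢 : ∀ T ∈ 𝒢, d < #T → ∀ F ∈ ℱ, ¬ T ⊆ F) :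
    LinearIndependent (ZMod p) (absFamily (p := p) K L d ℱ 𝒢) := by
  have hsmall : ∀ {T : Finset α}, #T ≤ d → interPoly (ZMod p) K univ T ≠ 0 := by
    intro T hT h
    rw [interPoly_eq_zero_iff hKp, univ_inter] at h
    exact absurd (hgap _ h) (by have := Nat.mod_le #T p; omega)
  refine linearIndependent_of_eval_triangular _ (Sum.elim (↑) (↑))
    (Sum.elim 0 fun T => #T.1 + 1) ?_ ?_
  · rintro (F | T)
    · simpa [absFamily, interPoly_eq_zero_iff hLp] using
        fun h => disjoint_left.1 hdisj (hℱK F F.2) h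
    · simp only [absFamily, Sum.elim_inr, upIndicator_mul_apply_self]
      split_ifs with hT
      · exact hsmall hT
      · exact one_ne_zero
  · rintro (F | T) (F' | T') hne hnz
    · have hFF' : F'.1 ≠ F.1 := fun h => hne (congrArg Sum.inl (Subtype.ext h))
      exact absurd ((interPoly_eq_zero_iff hLp _ _).2 (hint _ F'.2 _ F.2 hFF')) hnz
    · simp only [absFamily, Sum.elim_inr, Sum.elim_inl] at hnz
      split_ifs at hnz with hT'
      · exact absurd (mul_eq_zero_of_right _ ((interPoly_eq_zero_iff hKp _ _).2
          (by rw [univ_inter]; exact hℱK _ F.2))) hnz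
      · exact absurd (upIndicator_mul_apply_of_not_subset (h𝒢 _ T'.2 (not_le.1 hT') _ F.2) _) hnz
    · simp
    · have hsub : T'.1 ⊆ T.1 := by
        by_contra h
        exact hnz (upIndicator_mul_apply_of_not_subset h _)
      have hTT' : T'.1 ≠ T.1 := fun h => hne (congrArg Sum.inr (Subtype.ext h))
      simpa using card_lt_card (ssubset_of_subset_of_ne hsub hTT')

end Modular

def smallOrNonShadow (n d s : ℕ) (ℱ : Finset (Finset (Fin n))) : Finset (Finset (Fin n)) :=
  {T | #T ≤ s ∧ (d < #T → ∀ F ∈ ℱ, ¬ T ⊆ F)}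

lemma mem_smallOrNonShadow {n d s : ℕ} {ℱ : Finset (Finset (Fin n))} {T : Finset (Fin n)} :
    T ∈ smallOrNonShadow n d s ℱ ↔ #T ≤ s ∧ (d < #T → ∀ F ∈ ℱ, ¬ T ⊆ F) := by
  simp [smallOrNonShadow]

lemma card_smallOrNonShadow {n d s : ℕ} (hds : d ≤ s) (ℱ : Finset (Finset (Fin n))) :
    #(smallOrNonShadow n d s ℱ)
      = ∑ i ∈ range (d + 1), n.choose i + ∑ j ∈ Icc (d + 1) s, #(nonShadow n j ℱ) := by
  rw [card_eq_sum_card_layers _ (m := s) fun T hT => (mem_smallOrNonShadow.1 hT).1,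
    ← sum_range_add_sum_Ico _ (by omega : d + 1 ≤ s + 1), Ico_add_one_right_eq_Icc]
  congr 1
  · refine sum_congr rfl fun j hj => ?_
    calc _ = #(powersetCard j (univ : Finset (Fin n))) := by
          congr 1
          ext T
          simp only [mem_filter, mem_smallOrNonShadow, mem_powersetCard, subset_univ, true_and,
            mem_range] at hj ⊢
          omega
      _ = n.choose j := by simp
  · refine sum_congr rfl fun j hj => ?_
    congr 1
    ext T
    simp only [mem_filter, mem_smallOrNonShadow, nonShadow, mem_powersetCard, subset_univ,
      true_and, mem_Icc] at hj ⊢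
    constructor
    · rintro ⟨⟨-, h⟩, rfl⟩
      exact ⟨rfl, h (by omega)⟩
    · rintro ⟨rfl, h⟩
      exact ⟨⟨by omega, fun _ => h⟩, rfl⟩

/-- Modular non-shadow variant of the ABS theorem under the low-level exclusion
hypothesis `k > s − r` for every `k ∈ K`. -/
theorem stmt9 (p n r s : ℕ) (hp : p.Prime)
    (K L : Finset ℕ) (hKp : ∀ k ∈ K, k < p) (hLp : ∀ ℓ ∈ L, ℓ < p)
    (hdisj : Disjoint K L) (hKcard : K.card = r) (hLcard : L.card = s)
    (hrs : r ≤ s) (hgap : ∀ k ∈ K, s - r < k)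
    (ℱ : Finset (Finset (Fin n)))
    (hℱK : ∀ F ∈ ℱ, F.card % p ∈ K)
    (hint : ∀ E ∈ ℱ, ∀ F ∈ ℱ, E ≠ F → (E ∩ F).card % p ∈ L) :
    ℱ.card + ∑ j ∈ Finset.Icc (s - r + 1) s, (nonShadow n j ℱ).card
      ≤ ∑ i ∈ Finset.Icc (s - r + 1) s, n.choose i := by
  have := Fact.mk hp
  set 𝒢 := smallOrNonShadow n (s - r) s ℱ
  have hli := linearIndependent_absFamily hKp hLp hdisj hgap hℱK hint
    (𝒢 := 𝒢) fun T hT => (mem_smallOrNonShadow.1 hT).2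
  have hcard := hli.card_le_sum_choose
    (absFamily_mem_degLE hLcard.le (by omega) fun T hT => (mem_smallOrNonShadow.1 hT).1)
  rw [Fintype.card_sum, Fintype.card_coe, Fintype.card_coe, card_smallOrNonShadow (by omega),
    Fintype.card_fin, ← sum_range_add_sum_Ico _ (by omega : s - r + 1 ≤ s + 1),
    Ico_add_one_right_eq_Icc] at hcard
  omega
end

section
/- Under the hypotheses of the coefficient-sensitive modular bound (p prime, 1 ≤ s ≤ p−1, L ⊆ 𝔽_p with |L| = s, K ⊆ 𝔽_p ∖ L, ℱ ⊆ 2^[n] with |F| mod p ∈ K for all F ∈ ℱ and |E ∩ F| mod p ∈ L for distinct E, F ∈ ℱ), one has |ℱ| + Σ_{j∈bsupp(L)} |𝒩_j(ℱ)| ≤ Σ_{j∈bsupp(L)} C(n,j), where 𝒩_j(ℱ) is the set of j-subsets contained in no member of ℱ. -/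
/-!
With `P = ∏_{ℓ ∈ L} (X - ℓ)`, consider over `𝔽_p` the functions `T ↦ P(|T ∩ F|)` for `F ∈ ℱ`
together with the indicators `T ↦ [S ⊆ T]` for `S` in the non-shadows `𝒩_j(ℱ)`, `j ∈ bsupp(L)`.
Evaluating at the members of `ℱ` (where `P` vanishes on `L` but not on `K`, and no non-shadow set
is contained in a member) and using that the indicators are triangular for inclusion, this family
is linearly independent. Expanding `P` in the binomial basis and counting
`C(|T ∩ F|, j) = #{S ⊆ F : |S| = j, S ⊆ T}` puts the whole family in the span of the indicators
of the sets `S` with `|S| ∈ bsupp(L)`, of which there are `∑_{j ∈ bsupp(L)} C(n, j)`.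
-/

open Polynomial

/-- The binomial polynomial `C(t,j)` over `ZMod p`. -/
noncomputable def binomPoly (p j : ℕ) : Polynomial (ZMod p) :=
  Polynomial.C ((j.factorial : ZMod p))⁻¹ * descPochhammer (ZMod p) j

open Finset

section SupsetIndicator

variable {α : Type*} [DecidableEq α]

def supsetIndicator (R : Type*) [Zero R] [One R] (S : Finset α) : Finset α → R :=
  fun T => if S ⊆ T then 1 else 0

/-- Triangularity with respect to inclusion: evaluating a vanishing combination at a member of
its support of minimal cardinality isolates that member's coefficient. -/
theorem linearIndependent_supsetIndicator {R : Type*} [Ring R] :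
    LinearIndependent R (supsetIndicator R : Finset α → Finset α → R) := by
  rw [linearIndependent_iff]
  intro l hl
  by_contra hne
  obtain ⟨S₀, hS₀, hmin⟩ := l.support.exists_min_image card
    (Finsupp.support_nonempty_iff.mpr hne)
  have hS₀T := congrFun hl S₀
  rw [Finsupp.linearCombination_apply, Finsupp.sum, Finset.sum_apply,
    sum_eq_single_of_mem S₀ hS₀] at hS₀T
  · exact Finsupp.mem_support_iff.mp hS₀ (by simpa [supsetIndicator] using hS₀T)
  · intro S hS hSS₀
    have : ¬ S ⊆ S₀ := fun hsub => hSS₀ (eq_of_subset_of_card_le hsub (hmin S hS))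
    simp [supsetIndicator, this]

theorem natCast_choose_card_inter_eq_sum {R : Type*} [AddCommMonoidWithOne R] (j : ℕ)
    (F T : Finset α) :
    ((#(T ∩ F)).choose j : R) = ∑ S ∈ powersetCard j F, supsetIndicator R S T := by
  simp only [supsetIndicator, sum_boole, ← card_powersetCard]
  congr 2
  ext S
  simp only [mem_filter, mem_powersetCard, subset_inter_iff]
  tauto

end SupsetIndicator

theorem linearIndependent_sumElim_of_eval {R X ι κ : Type*} [Ring R] [NoZeroDivisors R]
    [Fintype ι] [Fintype κ] {u : ι → X → R} {w : κ → X → R} (x : ι → X)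
    (hw : LinearIndependent R w) (hwx : ∀ k i, w k (x i) = 0)
    (hdiag : ∀ i, u i (x i) ≠ 0) (hoff : ∀ i i', i ≠ i' → u i (x i') = 0) :
    LinearIndependent R (Sum.elim u w) := by
  rw [Fintype.linearIndependent_iff] at hw ⊢
  intro g hg
  rw [Fintype.sum_sum_type] at hg
  have hu : ∀ i, g (Sum.inl i) = 0 := by
    intro i
    have hi := congrFun hg (x i)
    simp only [Sum.elim_inl, Sum.elim_inr, Pi.add_apply, Finset.sum_apply, Pi.smul_apply,
      smul_eq_mul, hwx, mul_zero, sum_const_zero, add_zero, Pi.zero_apply] at hi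
    rw [sum_eq_single_of_mem i (mem_univ i) fun i' _ h => by rw [hoff i' i h, mul_zero]] at hi
    exact (mul_eq_zero.mp hi).resolve_right (hdiag i)
  have hw' := hw (fun k => g (Sum.inr k)) (by simpa [hu] using hg)
  rintro (i | k)
  exacts [hu i, hw' k]

theorem linearIndependent_sumElim_supsetIndicator {α R : Type*} [DecidableEq α] [Ring R]
    [NoZeroDivisors R] {ℱ 𝒩 : Finset (Finset α)} (f : ℕ → R) (hdiag : ∀ F ∈ ℱ, f #F ≠ 0)
    (hoff : ∀ E ∈ ℱ, ∀ F ∈ ℱ, E ≠ F → f #(E ∩ F) = 0) (h𝒩 : ∀ S ∈ 𝒩, ∀ F ∈ ℱ, ¬ S ⊆ F) :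
    LinearIndependent R (Sum.elim (fun (F : ℱ) T => f #(T ∩ F))
      (fun S : 𝒩 => supsetIndicator R (S : Finset α))) := by
  refine linearIndependent_sumElim_of_eval Subtype.val
    (linearIndependent_supsetIndicator.comp _ Subtype.val_injective) ?_ ?_ ?_
  · rintro ⟨S, hS⟩ ⟨F, hF⟩
    simp [supsetIndicator, h𝒩 S hS F hF]
  · rintro ⟨F, hF⟩
    simpa using hdiag F hF
  · rintro ⟨E, hE⟩ ⟨F, hF⟩ hEF
    exact hoff F hF E hE fun h => hEF (Subtype.ext h.symm)

theorem LinearIndependent.fintype_card_le_card_of_mem_span_image {R M ι κ : Type*} [Ring R]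
    [StrongRankCondition R] [AddCommGroup M] [Module R M] [Fintype ι] {v : ι → M}
    (hv : LinearIndependent R v) (b : κ → M) (t : Finset κ)
    (hspan : ∀ i, v i ∈ Submodule.span R (b '' t)) : Fintype.card ι ≤ #t := by
  classical
  calc Fintype.card ι ≤ #(t.image b) := by
        simpa only [coe_sort_coe, Fintype.card_coe] using
          linearIndependent_le_span_aux' v hv (t.image b : Set M)
            (by rw [coe_image]; exact Set.range_subset_iff.mpr hspan)
    _ ≤ #t := card_image_le

theorem binomPoly_eval_natCast {p : ℕ} [Fact p.Prime] {j : ℕ} (hj : j < p) (m : ℕ) :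
    (binomPoly p j).eval (m : ZMod p) = (m.choose j : ZMod p) := by
  have hfac : (j.factorial : ZMod p) ≠ 0 := by
    rw [Ne, ZMod.natCast_eq_zero_iff, Nat.Prime.dvd_factorial Fact.out]
    omega
  rw [binomPoly, eval_mul, eval_C, descPochhammer_eval_eq_descFactorial,
    Nat.descFactorial_eq_factorial_mul_choose, Nat.cast_mul, inv_mul_cancel_left₀ hfac]

theorem eval_card_inter_mem_span {α : Type*} [DecidableEq α] {p : ℕ} [Fact p.Prime]
    {P : Polynomial (ZMod p)} {c : ℕ → ZMod p} {d : ℕ} (hd : d < p)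
    (hP : P = ∑ j ∈ range (d + 1), c j • binomPoly p j) (F : Finset α) :
    (fun T => P.eval (#(T ∩ F) : ZMod p)) ∈ Submodule.span (ZMod p)
      (supsetIndicator (ZMod p) '' {S | #S ∈ (range (d + 1)).filter (fun j => c j ≠ 0)}) := by
  have hexpand : (fun T => P.eval (#(T ∩ F) : ZMod p)) =
      ∑ j ∈ range (d + 1), c j • ∑ S ∈ powersetCard j F, supsetIndicator (ZMod p) S := by
    funext T
    simp only [hP, eval_finsetSum, eval_smul, smul_eq_mul, Finset.sum_apply, Pi.smul_apply]
    refine sum_congr rfl fun j hj => ?_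
    rw [binomPoly_eval_natCast (by simp at hj; omega), natCast_choose_card_inter_eq_sum]
  rw [hexpand]
  refine Submodule.sum_mem _ fun j hj => ?_
  by_cases hcj : c j = 0
  · simp [hcj]
  refine Submodule.smul_mem _ _ (Submodule.sum_mem _ fun S hS => Submodule.subset_span ?_)
  rw [mem_powersetCard] at hS
  exact ⟨S, show #S ∈ _ from hS.2 ▸ mem_filter.mpr ⟨hj, hcj⟩, rfl⟩

theorem card_biUnion_powersetCard {α : Type*} [DecidableEq α] (s : Finset α) (B : Finset ℕ) :
    #(B.biUnion (s.powersetCard ·)) = ∑ j ∈ B, (#s).choose j := by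
  rw [card_biUnion ((pairwise_disjoint_powersetCard s).set_pairwise _)]
  simp only [card_powersetCard]

theorem coe_biUnion_powersetCard_univ {α : Type*} [DecidableEq α] [Fintype α] (B : Finset ℕ) :
    ((B.biUnion (univ.powersetCard ·) : Finset (Finset α)) : Set (Finset α)) = {S | #S ∈ B} := by
  ext S
  simp

theorem card_biUnion_nonShadow (n : ℕ) (ℱ : Finset (Finset (Fin n))) (B : Finset ℕ) :
    #(B.biUnion (nonShadow n · ℱ)) = ∑ j ∈ B, #(nonShadow n j ℱ) :=
  card_biUnion <| Set.PairwiseDisjoint.mono_on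
    ((pairwise_disjoint_powersetCard univ).set_pairwise _) fun _ _ => filter_subset _ _

theorem mem_biUnion_nonShadow {n : ℕ} {ℱ : Finset (Finset (Fin n))} {B : Finset ℕ}
    {S : Finset (Fin n)} : S ∈ B.biUnion (nonShadow n · ℱ) ↔ #S ∈ B ∧ ∀ F ∈ ℱ, ¬ S ⊆ F := by
  simp [nonShadow]

theorem stmt12_general (p n s : ℕ) (hp : p.Prime) (hs2 : s ≤ p - 1)
    (L K : Finset (ZMod p)) (hKL : Disjoint K L)
    (c : ℕ → ZMod p)
    (hc : ∏ ℓ ∈ L, (X - Polynomial.C ℓ) =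
      ∑ j ∈ Finset.range (s + 1), c j • binomPoly p j)
    (ℱ : Finset (Finset (Fin n)))
    (hℱK : ∀ F ∈ ℱ, (F.card : ZMod p) ∈ K)
    (hint : ∀ E ∈ ℱ, ∀ F ∈ ℱ, E ≠ F → ((E ∩ F).card : ZMod p) ∈ L) :
    ℱ.card + ∑ j ∈ (Finset.range (s + 1)).filter (fun j => c j ≠ 0),
        (nonShadow n j ℱ).card
      ≤ ∑ j ∈ (Finset.range (s + 1)).filter (fun j => c j ≠ 0), n.choose j := by
  have : Fact p.Prime := ⟨hp⟩
  set B := (range (s + 1)).filter (fun j => c j ≠ 0)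
  set P := ∏ ℓ ∈ L, (X - Polynomial.C ℓ)
  have hPeval : ∀ x, P.eval x = 0 ↔ x ∈ L := by
    simp [P, eval_prod, prod_eq_zero_iff, sub_eq_zero]
  have hli := linearIndependent_sumElim_supsetIndicator (𝒩 := B.biUnion (nonShadow n · ℱ))
    (fun m => P.eval (m : ZMod p))
    (fun F hF => (hPeval _).not.mpr (disjoint_left.mp hKL (hℱK F hF)))
    (fun E hE F hF hEF => (hPeval _).mpr (hint E hE F hF hEF))
    (fun S hS => (mem_biUnion_nonShadow.mp hS).2)
  have hcard := hli.fintype_card_le_card_of_mem_span_image (supsetIndicator (ZMod p))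
    (B.biUnion (univ.powersetCard ·)) <| by
      rw [coe_biUnion_powersetCard_univ]
      rintro (⟨F, -⟩ | ⟨S, hS⟩)
      · exact eval_card_inter_mem_span (by have := hp.two_le; omega) hc F
      · exact Submodule.subset_span ⟨S, (mem_biUnion_nonShadow.mp hS).1, rfl⟩
  rwa [Fintype.card_sum, Fintype.card_coe, Fintype.card_coe, card_biUnion_nonShadow,
    card_biUnion_powersetCard, card_univ, Fintype.card_fin] at hcard

/-- Non-shadow refinement of the coefficient-sensitive modular bound:
`|ℱ| + Σ_{j ∈ bsupp(L)} |𝒩_j(ℱ)| ≤ Σ_{j ∈ bsupp(L)} C(n,j)`. -/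
theorem stmt12 (p n s : ℕ) (hp : p.Prime) (hs1 : 1 ≤ s) (hs2 : s ≤ p - 1)
    (L K : Finset (ZMod p)) (hLcard : L.card = s) (hKL : Disjoint K L)
    (c : ℕ → ZMod p)
    (hc : ∏ ℓ ∈ L, (X - Polynomial.C ℓ) =
      ∑ j ∈ Finset.range (s + 1), c j • binomPoly p j)
    (ℱ : Finset (Finset (Fin n)))
    (hℱK : ∀ F ∈ ℱ, (F.card : ZMod p) ∈ K)
    (hint : ∀ E ∈ ℱ, ∀ F ∈ ℱ, E ≠ F → ((E ∩ F).card : ZMod p) ∈ L) :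
    ℱ.card + ∑ j ∈ (Finset.range (s + 1)).filter (fun j => c j ≠ 0),
        (nonShadow n j ℱ).card
      ≤ ∑ j ∈ (Finset.range (s + 1)).filter (fun j => c j ≠ 0), n.choose j :=
  stmt12_general p n s hp hs2 L K hKL c hc ℱ hℱK hint
end

section
/- Let p be prime, 1 ≤ s ≤ p−1, 0 ≤ m ≤ s−1, and R ⊆ {0,…,p−1} a set of size m disjoint from {0,1,…,s−m−1}. Let L = {0,1,…,s−m−1} ∪ R ⊆ 𝔽_p. Then bsupp(L) ⊆ {s−m, s−m+1, …, s}, i.e., in the expansion P_L(t) = Σ_{j=0}^s c_j(L)·C(t,j) over 𝔽_p, all coefficients c_j(L) with j < s−m vanish. -/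
/-!
`P_L` vanishes at `0, …, s - m - 1`. Evaluating the binomial expansion at `n < p` gives
`∑_{j ≤ n} c_j (n choose j)`, a unitriangular system in the `c_j` (the factorials are units
because `n < p`), so the coefficients `c_0, …, c_{s-m-1}` vanish one after another.
-/

open Polynomial

section BinomialExpansion

variable {p : ℕ}

theorem binomPoly_eval_natCast_s15 (j n : ℕ) :
    (binomPoly p j).eval (n : ZMod p) = (j.factorial : ZMod p)⁻¹ * n.descFactorial j := by
  simp [binomPoly, descPochhammer_eval_eq_descFactorial]

theorem binomPoly_eval_natCast_of_lt {j n : ℕ} (h : n < j) :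
    (binomPoly p j).eval (n : ZMod p) = 0 := by
  simp [binomPoly_eval_natCast_s15, Nat.descFactorial_eq_zero_iff_lt.mpr h]

variable [Fact p.Prime]

theorem binomPoly_eval_natCast_self {n : ℕ} (hn : n < p) :
    (binomPoly p n).eval (n : ZMod p) = 1 := by
  have hfac : (n.factorial : ZMod p) ≠ 0 := by
    rw [Ne, ZMod.natCast_eq_zero_iff, Nat.Prime.dvd_factorial Fact.out]
    omega
  rw [binomPoly_eval_natCast_s15, Nat.descFactorial_self, inv_mul_cancel₀ hfac]

theorem eval_sum_binomPoly_natCast {N n : ℕ} (c : ℕ → ZMod p) (hnN : n < N) (hnp : n < p)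
    (hc : ∀ i < n, c i = 0) :
    (∑ j ∈ Finset.range N, c j • binomPoly p j).eval (n : ZMod p) = c n := by
  rw [eval_finsetSum, Finset.sum_eq_single n]
  · rw [eval_smul, binomPoly_eval_natCast_self hnp, smul_eq_mul, mul_one]
  · intro j _ hjn
    rcases lt_or_gt_of_ne hjn with hj | hj
    · rw [hc j hj, zero_smul, eval_zero]
    · rw [eval_smul, binomPoly_eval_natCast_of_lt hj, smul_zero]
  · exact fun h => absurd (Finset.mem_range.mpr hnN) h

theorem binomial_coeff_eq_zero_of_eval_eq_zero {N k : ℕ} (c : ℕ → ZMod p) (hkN : k ≤ N)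
    (hkp : k ≤ p)
    (hf : ∀ n < k, (∑ j ∈ Finset.range N, c j • binomPoly p j).eval (n : ZMod p) = 0) :
    ∀ j < k, c j = 0 := by
  intro j
  induction j using Nat.strong_induction_on with
  | _ n ih =>
    intro hn
    rw [← hf n hn, eval_sum_binomPoly_natCast c (by omega) (by omega) fun i hi => ih i hi (by omega)]

end BinomialExpansion

theorem stmt15_general (p s m : ℕ) (hp : p.Prime) (hs2 : s ≤ p - 1)
    (R : Finset ℕ)
    (c : ℕ → ZMod p)
    (hc : ∏ ℓ ∈ (Finset.range (s - m) ∪ R).image (Nat.cast : ℕ → ZMod p),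
        (X - Polynomial.C ℓ) = ∑ j ∈ Finset.range (s + 1), c j • binomPoly p j) :
    ∀ j < s - m, c j = 0 := by
  have := Fact.mk hp
  refine binomial_coeff_eq_zero_of_eval_eq_zero (N := s + 1) c (by omega) (by omega) fun n hn => ?_
  rw [← hc, eval_prod]
  exact Finset.prod_eq_zero
    (Finset.mem_image_of_mem _ (Finset.mem_union_left _ (Finset.mem_range.mpr hn))) (by simp)

/-- For an almost-initial residue pattern `L = {0,…,s−m−1} ∪ R (mod p)`, all
coefficients `c_j(L)` of the binomial expansion of `P_L` with `j < s − m` vanish,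
i.e. `bsupp(L) ⊆ {s−m, …, s}`. -/
theorem stmt15 (p s m : ℕ) (hp : p.Prime) (hs1 : 1 ≤ s) (hs2 : s ≤ p - 1)
    (hm : m ≤ s - 1) (R : Finset ℕ) (hRcard : R.card = m)
    (hRp : ∀ x ∈ R, x < p) (hRdisj : Disjoint R (Finset.range (s - m)))
    (c : ℕ → ZMod p)
    (hc : ∏ ℓ ∈ (Finset.range (s - m) ∪ R).image (Nat.cast : ℕ → ZMod p),
        (X - Polynomial.C ℓ) = ∑ j ∈ Finset.range (s + 1), c j • binomPoly p j) :
    ∀ j < s - m, c j = 0 :=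
  stmt15_general p s m hp hs2 R c hc
end
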